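/- arXiv:1609.06962 — 2 statements merged into one kernel-verified Lean document; each statement's English description precedes it below -/
import Mathlib

section
/- Let (U,P) be a smooth solution of the Leray equations −ΔU + (U·∇)U + a y·∇U + aU = −∇P, ∇·U = 0 on ℝ³ with a > 0, and define the generalized energy Π = |U|²/2 + P + a y·U. Then Π satisfies −ΔΠ + (U + a y)·∇Π = −|Ω|² on ℝ³, where Ω = ∇×U. -/
open MeasureTheory Filter Topology

noncomputable section

abbrev E3 := EuclideanSpace ℝ (Fin 3)

def pd (i : Fin 3) (f : E3 → ℝ) (x : E3) : ℝ :=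
  fderiv ℝ f x (EuclideanSpace.single i 1)

def lap (f : E3 → ℝ) (x : E3) : ℝ := ∑ i, pd i (pd i f) x

def divg (U : E3 → Fin 3 → ℝ) (x : E3) : ℝ := ∑ i, pd i (fun y => U y i) x

def curl (U : E3 → Fin 3 → ℝ) (x : E3) (i : Fin 3) : ℝ :=
  pd (i + 1) (fun y => U y (i + 2)) x - pd (i + 2) (fun y => U y (i + 1)) x

namespace S5

lemma contDiff_pd {f : E3 → ℝ} (hf : ContDiff ℝ (⊤ : ℕ∞) f) (i : Fin 3) :
    ContDiff ℝ (⊤ : ℕ∞) (pd i f) := by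
  have h := hf.fderiv_right (m := (⊤ : ℕ∞)) le_rfl
  exact (ContinuousLinearMap.apply ℝ ℝ (EuclideanSpace.single i (1:ℝ))).contDiff.comp h

lemma pd_add {f g : E3 → ℝ} {x : E3} (hf : DifferentiableAt ℝ f x)
    (hg : DifferentiableAt ℝ g x) (i : Fin 3) :
    pd i (fun y => f y + g y) x = pd i f x + pd i g x := by
  simp [pd, fderiv_fun_add hf hg]

lemma pd_neg {f : E3 → ℝ} {x : E3} (i : Fin 3) :
    pd i (fun y => -f y) x = -pd i f x := by
  simp [pd, fderiv_neg]

lemma pd_mul {f g : E3 → ℝ} {x : E3} (hf : DifferentiableAt ℝ f x)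
    (hg : DifferentiableAt ℝ g x) (i : Fin 3) :
    pd i (fun y => f y * g y) x = f x * pd i g x + g x * pd i f x := by
  simp [pd, fderiv_fun_mul hf hg]

lemma pd_const_mul {f : E3 → ℝ} {x : E3} (hf : DifferentiableAt ℝ f x) (c : ℝ) (i : Fin 3) :
    pd i (fun y => c * f y) x = c * pd i f x := by
  simp [pd, fderiv_const_mul hf]

lemma pd_sum {n : ℕ} {f : Fin n → E3 → ℝ} {x : E3}
    (hf : ∀ j, DifferentiableAt ℝ (f j) x) (i : Fin 3) :
    pd i (fun y => ∑ j, f j y) x = ∑ j, pd i (f j) x := by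
  simp [pd, fderiv_fun_sum (fun j _ => hf j)]

lemma pd_div_const {f : E3 → ℝ} {x : E3} (hf : DifferentiableAt ℝ f x) (c : ℝ) (i : Fin 3) :
    pd i (fun y => f y / c) x = pd i f x / c := by
  have h : (fun y => f y / c) = fun y => c⁻¹ * f y := by
    funext y; rw [div_eq_inv_mul]
  rw [h, pd_const_mul hf, pd, div_eq_inv_mul]

lemma pd_coord (i j : Fin 3) (x : E3) :
    pd i (fun y : E3 => y j) x = if j = i then 1 else 0 := by
  have : (fun y : E3 => y j) = fun y => (EuclideanSpace.proj (𝕜 := ℝ) j) y := rfl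
  rw [pd, this, ContinuousLinearMap.fderiv]
  simp [EuclideanSpace.single_apply]

lemma pd_comm {f : E3 → ℝ} (hf : ContDiff ℝ (⊤ : ℕ∞) f) (i j : Fin 3) (x : E3) :
    pd i (pd j f) x = pd j (pd i f) x := by
  have hsymm : IsSymmSndFDerivAt ℝ f x :=
    (hf.contDiffAt).isSymmSndFDerivAt (by rw [minSmoothness_of_isRCLikeNormedField]; exact WithTop.coe_le_coe.mpr le_top)
  have hd : DifferentiableAt ℝ (fderiv ℝ f) x :=
    ((hf.fderiv_right (m := (⊤ : ℕ∞)) le_rfl).differentiable (by simp)) x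
  have key : ∀ (k : Fin 3) (w : E3), pd k (fun y => fderiv ℝ f y w) x
      = fderiv ℝ (fderiv ℝ f) x (EuclideanSpace.single k 1) w := by
    intro k w
    rw [pd, fderiv_clm_apply hd (differentiableAt_const w)]
    simp
  have e1 : pd i (pd j f) x
      = fderiv ℝ (fderiv ℝ f) x (EuclideanSpace.single i 1) (EuclideanSpace.single j 1) :=
    key i _
  have e2 : pd j (pd i f) x
      = fderiv ℝ (fderiv ℝ f) x (EuclideanSpace.single j 1) (EuclideanSpace.single i 1) :=
    key j _
  rw [e1, e2, hsymm.eq]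

lemma pd_sq {f : E3 → ℝ} {x : E3} (hf : DifferentiableAt ℝ f x) (i : Fin 3) :
    pd i (fun y => f y ^ 2) x = 2 * f x * pd i f x := by
  have h : (fun y => f y ^ 2) = fun y => f y * f y := by funext y; ring
  rw [h, pd_mul hf hf]; ring

lemma pd_const (c : ℝ) (i : Fin 3) (x : E3) : pd i (fun _ => c) x = 0 := by
  simp [pd]

section Main

variable {a : ℝ} {U : E3 → Fin 3 → ℝ} {P : E3 → ℝ}

lemma grad_energy (hU : ContDiff ℝ (⊤ : ℕ∞) (fun x => U x)) (hP : ContDiff ℝ (⊤ : ℕ∞) P)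
    (i : Fin 3) (y : E3) :
    pd i (fun z => (∑ j, (U z j) ^ 2) / 2 + P z + a * ∑ j, z j * U z j) y
      = (∑ j, U y j * pd i (fun z => U z j) y) + pd i P y + a * U y i
        + a * ∑ j, y j * pd i (fun z => U z j) y := by
  have hu : ∀ j, ContDiff ℝ (⊤ : ℕ∞) (fun z => U z j) := fun j => contDiff_pi.mp hU j
  have hud : ∀ j (z : E3), DifferentiableAt ℝ (fun w => U w j) z :=
    fun j z => ((hu j).differentiable (by simp)) z
  have hcoord : ∀ (j : Fin 3), ContDiff ℝ (⊤ : ℕ∞) (fun z : E3 => z j) :=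
    fun j => (EuclideanSpace.proj (𝕜 := ℝ) j).contDiff
  have hc0 : ContDiff ℝ (⊤ : ℕ∞) (fun z : E3 => ∑ j, (U z j) ^ 2) :=
    ContDiff.sum fun j _ => (hu j).pow 2
  have hc1 : ContDiff ℝ (⊤ : ℕ∞) (fun z : E3 => (∑ j, (U z j) ^ 2) / 2) := hc0.div_const 2
  have hc3 : ContDiff ℝ (⊤ : ℕ∞) (fun z : E3 => a * ∑ j, z j * U z j) :=
    contDiff_const.mul (ContDiff.sum fun j _ => (hcoord j).mul (hu j))
  rw [pd_add (((hc1.add hP).differentiable (by simp)) y) ((hc3.differentiable (by simp)) y),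
      pd_add ((hc1.differentiable (by simp)) y) ((hP.differentiable (by simp)) y),
      pd_div_const ((hc0.differentiable (by simp)) y),
      pd_sum (fun j => ((hu j).pow 2).differentiable (by simp) y),
      pd_const_mul ((ContDiff.sum (fun j (_ : j ∈ (Finset.univ : Finset (Fin 3))) =>
        (hcoord j).mul (hu j))).differentiable (by simp) y) a,
      pd_sum (fun j => ((hcoord j).mul (hu j)).differentiable (by simp) y)]
  rw [Finset.sum_congr rfl (fun j _ => pd_sq (hud j y) i),
      Finset.sum_congr rfl (fun j _ =>
        pd_mul (((hcoord j).differentiable (by simp)) y) (hud j y) i)]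
  have e1 : (∑ j, 2 * U y j * pd i (fun z => U z j) y) / 2
      = ∑ j, U y j * pd i (fun z => U z j) y := by
    rw [Finset.sum_div]; exact Finset.sum_congr rfl fun j _ => by ring
  have e2 : (∑ j, (y j * pd i (fun z => U z j) y + U y j * pd i (fun z : E3 => z j) y))
      = (∑ j, y j * pd i (fun z => U z j) y) + U y i := by
    rw [Finset.sum_add_distrib]
    congr 1
    rw [Finset.sum_congr rfl (fun j _ => by rw [pd_coord])]
    simp [mul_ite]
  rw [e1, e2]; ring


lemma second_energy (hU : ContDiff ℝ (⊤ : ℕ∞) (fun x => U x)) (hP : ContDiff ℝ (⊤ : ℕ∞) P)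
    (i : Fin 3) (x : E3) :
    pd i (fun y => (∑ j, U y j * pd i (fun z => U z j) y) + pd i P y + a * U y i
        + a * ∑ j, y j * pd i (fun z => U z j) y) x
    = (∑ j, (U x j * pd i (pd i (fun z => U z j)) x
          + pd i (fun z => U z j) x * pd i (fun z => U z j) x))
      + pd i (pd i P) x + a * pd i (fun z => U z i) x
      + a * ∑ j, (x j * pd i (pd i (fun z => U z j)) x
          + pd i (fun z => U z j) x * (if j = i then (1:ℝ) else 0)) := by
  have hu : ∀ j, ContDiff ℝ (⊤ : ℕ∞) (fun z => U z j) := fun j => contDiff_pi.mp hU j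
  have hud : ∀ j (z : E3), DifferentiableAt ℝ (fun w => U w j) z :=
    fun j z => ((hu j).differentiable (by simp)) z
  have hcoord : ∀ (j : Fin 3), ContDiff ℝ (⊤ : ℕ∞) (fun z : E3 => z j) :=
    fun j => (EuclideanSpace.proj (𝕜 := ℝ) j).contDiff
  have hD : ∀ k j, ContDiff ℝ (⊤ : ℕ∞) (pd k (fun z => U z j)) :=
    fun k j => contDiff_pd (hu j) k
  have hA : ContDiff ℝ (⊤ : ℕ∞) (fun y : E3 => ∑ j, U y j * pd i (fun z => U z j) y) :=
    ContDiff.sum fun j _ => (hu j).mul (hD i j)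
  have hB : ContDiff ℝ (⊤ : ℕ∞) (fun y : E3 => pd i P y) := contDiff_pd hP i
  have hC : ContDiff ℝ (⊤ : ℕ∞) (fun y : E3 => a * U y i) := contDiff_const.mul (hu i)
  have hE0 : ContDiff ℝ (⊤ : ℕ∞) (fun y : E3 => ∑ j, y j * pd i (fun z => U z j) y) :=
    ContDiff.sum fun j _ => (hcoord j).mul (hD i j)
  have hE : ContDiff ℝ (⊤ : ℕ∞) (fun y : E3 => a * ∑ j, y j * pd i (fun z => U z j) y) :=
    contDiff_const.mul hE0
  rw [pd_add ((((hA.add hB).add hC).differentiable (by simp)) x) ((hE.differentiable (by simp)) x),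
      pd_add (((hA.add hB).differentiable (by simp)) x) ((hC.differentiable (by simp)) x),
      pd_add ((hA.differentiable (by simp)) x) ((hB.differentiable (by simp)) x),
      pd_sum (fun j => ((hu j).mul (hD i j)).differentiable (by simp) x),
      pd_const_mul ((hu i).differentiable (by simp) x) a,
      pd_const_mul ((hE0.differentiable (by simp)) x) a,
      pd_sum (fun j => ((hcoord j).mul (hD i j)).differentiable (by simp) x),
      Finset.sum_congr rfl (fun j _ =>
        pd_mul (hud j x) (((hD i j).differentiable (by simp)) x) i),
      Finset.sum_congr rfl (fun j _ =>
        pd_mul (((hcoord j).differentiable (by simp)) x) (((hD i j).differentiable (by simp)) x) i)]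
  simp only [pd_coord]

lemma leray_deriv (hU : ContDiff ℝ (⊤ : ℕ∞) (fun x => U x)) (hP : ContDiff ℝ (⊤ : ℕ∞) P)
    (i : Fin 3) (x : E3) :
    pd i (fun y => -lap (fun z => U z i) y + (∑ j, U y j * pd j (fun z => U z i) y)
        + a * (∑ j, y j * pd j (fun z => U z i) y) + a * U y i + pd i P y) x
    = -(∑ k, pd i (pd k (pd k (fun z => U z i))) x)
      + (∑ j, (U x j * pd i (pd j (fun z => U z i)) x
          + pd j (fun z => U z i) x * pd i (fun z => U z j) x))
      + a * (∑ j, (x j * pd i (pd j (fun z => U z i)) x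
          + pd j (fun z => U z i) x * (if j = i then (1:ℝ) else 0)))
      + a * pd i (fun z => U z i) x + pd i (pd i P) x := by
  have hu : ∀ j, ContDiff ℝ (⊤ : ℕ∞) (fun z => U z j) := fun j => contDiff_pi.mp hU j
  have hud : ∀ j (z : E3), DifferentiableAt ℝ (fun w => U w j) z :=
    fun j z => ((hu j).differentiable (by simp)) z
  have hcoord : ∀ (j : Fin 3), ContDiff ℝ (⊤ : ℕ∞) (fun z : E3 => z j) :=
    fun j => (EuclideanSpace.proj (𝕜 := ℝ) j).contDiff
  have hD : ∀ k j, ContDiff ℝ (⊤ : ℕ∞) (pd k (fun z => U z j)) :=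
    fun k j => contDiff_pd (hu j) k
  have hD2 : ∀ l k j, ContDiff ℝ (⊤ : ℕ∞) (pd l (pd k (fun z => U z j))) :=
    fun l k j => contDiff_pd (hD k j) l
  have hlapeq : lap (fun z => U z i) = fun y => ∑ k, pd k (pd k (fun z => U z i)) y := rfl
  have hlapc : ContDiff ℝ (⊤ : ℕ∞) (lap (fun z => U z i)) := by
    rw [hlapeq]; exact ContDiff.sum fun k _ => hD2 k k i
  have hA : ContDiff ℝ (⊤ : ℕ∞) (fun y : E3 => -lap (fun z => U z i) y) := hlapc.neg
  have hB : ContDiff ℝ (⊤ : ℕ∞) (fun y : E3 => ∑ j, U y j * pd j (fun z => U z i) y) :=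
    ContDiff.sum fun j _ => (hu j).mul (hD j i)
  have hC0 : ContDiff ℝ (⊤ : ℕ∞) (fun y : E3 => ∑ j, y j * pd j (fun z => U z i) y) :=
    ContDiff.sum fun j _ => (hcoord j).mul (hD j i)
  have hC : ContDiff ℝ (⊤ : ℕ∞) (fun y : E3 => a * ∑ j, y j * pd j (fun z => U z i) y) :=
    contDiff_const.mul hC0
  have hDD : ContDiff ℝ (⊤ : ℕ∞) (fun y : E3 => a * U y i) := contDiff_const.mul (hu i)
  have hE : ContDiff ℝ (⊤ : ℕ∞) (fun y : E3 => pd i P y) := contDiff_pd hP i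
  rw [pd_add (((((hA.add hB).add hC).add hDD).differentiable (by simp)) x)
        ((hE.differentiable (by simp)) x),
      pd_add ((((hA.add hB).add hC).differentiable (by simp)) x) ((hDD.differentiable (by simp)) x),
      pd_add (((hA.add hB).differentiable (by simp)) x) ((hC.differentiable (by simp)) x),
      pd_add ((hA.differentiable (by simp)) x) ((hB.differentiable (by simp)) x),
      pd_neg, hlapeq,
      pd_sum (fun k => ((hD2 k k i).differentiable (by simp)) x),
      pd_sum (fun j => ((hu j).mul (hD j i)).differentiable (by simp) x),
      pd_const_mul ((hu i).differentiable (by simp) x) a,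
      pd_const_mul ((hC0.differentiable (by simp)) x) a,
      pd_sum (fun j => ((hcoord j).mul (hD j i)).differentiable (by simp) x),
      Finset.sum_congr rfl (fun j _ =>
        pd_mul (hud j x) (((hD j i).differentiable (by simp)) x) i),
      Finset.sum_congr rfl (fun j _ =>
        pd_mul (((hcoord j).differentiable (by simp)) x) (((hD j i).differentiable (by simp)) x) i)]
  simp only [pd_coord]

end Main

end S5

/-- the generalized energy `Π = |U|²/2 + P + a y·U` of a solution of the
    Leray equations satisfies `−ΔΠ + (U + a y)·∇Π = −|Ω|²`. -/
theorem stmt5 (a : ℝ) (ha : 0 < a) (U : E3 → Fin 3 → ℝ) (P : E3 → ℝ)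
    (hU : ContDiff ℝ (⊤ : ℕ∞) (fun x => U x)) (hP : ContDiff ℝ (⊤ : ℕ∞) P)
    (hLeray : ∀ x : E3, ∀ i : Fin 3,
      -lap (fun y => U y i) x + (∑ j, U x j * pd j (fun y => U y i) x) +
        a * (∑ j, x j * pd j (fun y => U y i) x) + a * U x i = -pd i P x)
    (hdiv : ∀ x, divg U x = 0) :
    ∀ x : E3,
      -lap (fun y => (∑ i, (U y i) ^ 2) / 2 + P y + a * ∑ i, y i * U y i) x +
        ∑ i, (U x i + a * x i) *
          pd i (fun y => (∑ j, (U y j) ^ 2) / 2 + P y + a * ∑ j, y j * U y j) x =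
      -(∑ i, (curl U x i) ^ 2) := by

  intro x
  have hu : ∀ j, ContDiff ℝ (⊤ : ℕ∞) (fun z => U z j) := fun j => contDiff_pi.mp hU j
  have hD : ∀ k j, ContDiff ℝ (⊤ : ℕ∞) (pd k (fun z => U z j)) :=
    fun k j => S5.contDiff_pd (hu j) k
  have hD2 : ∀ l k j, ContDiff ℝ (⊤ : ℕ∞) (pd l (pd k (fun z => U z j))) :=
    fun l k j => S5.contDiff_pd (hD k j) l
  -- commutation of derivatives (function level)
  have c10 : ∀ j, pd 1 (pd 0 (fun z => U z j)) = pd 0 (pd 1 (fun z => U z j)) :=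
    fun j => funext (S5.pd_comm (hu j) 1 0)
  have c20 : ∀ j, pd 2 (pd 0 (fun z => U z j)) = pd 0 (pd 2 (fun z => U z j)) :=
    fun j => funext (S5.pd_comm (hu j) 2 0)
  have c21 : ∀ j, pd 2 (pd 1 (fun z => U z j)) = pd 1 (pd 2 (fun z => U z j)) :=
    fun j => funext (S5.pd_comm (hu j) 2 1)
  have t10 : ∀ l j, pd 1 (pd 0 (pd l (fun z => U z j))) = pd 0 (pd 1 (pd l (fun z => U z j))) :=
    fun l j => funext (S5.pd_comm (hD l j) 1 0)
  have t20 : ∀ l j, pd 2 (pd 0 (pd l (fun z => U z j))) = pd 0 (pd 2 (pd l (fun z => U z j))) :=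
    fun l j => funext (S5.pd_comm (hD l j) 2 0)
  have t21 : ∀ l j, pd 2 (pd 1 (pd l (fun z => U z j))) = pd 1 (pd 2 (pd l (fun z => U z j))) :=
    fun l j => funext (S5.pd_comm (hD l j) 2 1)
  -- divergence facts
  have hdiv0 : ∀ y : E3, (∑ j, pd j (fun z => U z j) y) = 0 := fun y => hdiv y
  have hdivf : (fun y : E3 => ∑ j, pd j (fun z => U z j) y) = fun _ => (0:ℝ) :=
    funext hdiv0
  have d1 : ∀ (k : Fin 3) (y : E3), (∑ j, pd k (pd j (fun z => U z j)) y) = 0 := by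
    intro k y
    rw [← S5.pd_sum (fun j => ((hD j j).differentiable (by simp)) y) k, hdivf,
      S5.pd_const]
  have d1f : ∀ k : Fin 3, (fun y : E3 => ∑ j, pd k (pd j (fun z => U z j)) y) = fun _ => (0:ℝ) :=
    fun k => funext (d1 k)
  have d2 : ∀ k : Fin 3, (∑ j, pd k (pd k (pd j (fun z => U z j))) x) = 0 := by
    intro k
    rw [← S5.pd_sum (fun j => ((hD2 k j j).differentiable (by simp)) x) k, d1f k,
      S5.pd_const]
  -- differentiated Leray equations
  have hFzero : ∀ i : Fin 3,
      (fun y => -lap (fun z => U z i) y + (∑ j, U y j * pd j (fun z => U z i) y)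
        + a * (∑ j, y j * pd j (fun z => U z i) y) + a * U y i + pd i P y)
      = fun _ : E3 => (0:ℝ) := by
    intro i; funext y
    have h := hLeray y i
    dsimp only
    linarith
  have hFpd : ∀ i : Fin 3, pd i
      (fun y => -lap (fun z => U z i) y + (∑ j, U y j * pd j (fun z => U z i) y)
        + a * (∑ j, y j * pd j (fun z => U z i) y) + a * U y i + pd i P y) x = 0 :=
    fun i => (congrArg (fun g => pd i g x) (hFzero i)).trans (S5.pd_const 0 i x)
  have h2 := fun i : Fin 3 =>
    (S5.leray_deriv (a := a) (U := U) (P := P) hU hP i x).symm.trans (hFpd i)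
  -- gradient of the energy, as functions
  have hgradf : ∀ i : Fin 3,
      pd i (fun z => (∑ j, (U z j) ^ 2) / 2 + P z + a * ∑ j, z j * U z j)
      = fun y => (∑ j, U y j * pd i (fun z => U z j) y) + pd i P y + a * U y i
        + a * ∑ j, y j * pd i (fun z => U z j) y :=
    fun i => funext (S5.grad_energy (a := a) hU hP i)
  have e_lap : lap (fun y => (∑ i, (U y i) ^ 2) / 2 + P y + a * ∑ i, y i * U y i) x
      = ∑ i, pd i (pd i (fun y => (∑ i, (U y i) ^ 2) / 2 + P y + a * ∑ i, y i * U y i)) x :=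
    rfl
  have h1 := fun i : Fin 3 => hLeray x i
  simp only [lap] at h1
  simp only [Fin.sum_univ_three] at h1
  rw [e_lap]
  simp only [hgradf]
  simp only [S5.second_energy (a := a) (U := U) (P := P) hU hP]
  simp only [Fin.sum_univ_three, curl] at h2 d1 d2 ⊢
  have h20 := h2 0; have h21 := h2 1; have h22 := h2 2
  have d1x0 := d1 0 x; have d1x1 := d1 1 x; have d1x2 := d1 2 x
  have d20 := d2 0; have d21 := d2 1; have d22 := d2 2
  have h10 := h1 0; have h11 := h1 1; have h12 := h1 2
  simp only [c10, c20, c21, t10, t20, t21] at h20 h21 h22 d1x0 d1x1 d1x2 d20 d21 d22 ⊢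
  simp at h20 h21 h22 ⊢
  linear_combination (U x 0 + a * x 0) * h10 + (U x 1 + a * x 1) * h11
    + (U x 2 + a * x 2) * h12 - h20 - h21 - h22
    + (U x 0 + a * x 0) * d1x0 + (U x 1 + a * x 1) * d1x1 + (U x 2 + a * x 2) * d1x2
    - d20 - d21 - d22


end
end

section
/- Let (U,P) be a smooth solution of the Leray equations with a > 0 such that the generalized energy Π = |U|²/2 + P + a y·U is constant on ℝ³. Then Ω = ∇×U vanishes identically, and each component of U is a harmonic function on ℝ³. -/
open MeasureTheory Filter Topology

set_option maxHeartbeats 1000000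

noncomputable section

namespace LerayAux
variable {f g : E3 → ℝ}

lemma contDiff_pd (hf : ContDiff ℝ (⊤ : ℕ∞) f) (i : Fin 3) : ContDiff ℝ (⊤ : ℕ∞) (pd i f) :=
  (hf.fderiv_right (by simp)).clm_apply contDiff_const

lemma diff (hf : ContDiff ℝ (⊤ : ℕ∞) f) : ∀ x, DifferentiableAt ℝ f x :=
  fun x => (hf.differentiable (by simp)).differentiableAt

lemma pd_add (hf : ContDiff ℝ (⊤ : ℕ∞) f) (hg : ContDiff ℝ (⊤ : ℕ∞) g) (i x) :
    pd i (fun y => f y + g y) x = pd i f x + pd i g x := by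
  unfold pd; rw [fderiv_fun_add (diff hf x) (diff hg x)]; rfl

lemma pd_sub (hf : ContDiff ℝ (⊤ : ℕ∞) f) (hg : ContDiff ℝ (⊤ : ℕ∞) g) (i x) :
    pd i (fun y => f y - g y) x = pd i f x - pd i g x := by
  unfold pd; rw [fderiv_fun_sub (diff hf x) (diff hg x)]; rfl

lemma pd_mul (hf : ContDiff ℝ (⊤ : ℕ∞) f) (hg : ContDiff ℝ (⊤ : ℕ∞) g) (i x) :
    pd i (fun y => f y * g y) x = pd i f x * g x + f x * pd i g x := by
  unfold pd; rw [fderiv_fun_mul (diff hf x) (diff hg x)]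
  simp; ring

lemma pd_const_mul (hg : ContDiff ℝ (⊤ : ℕ∞) g) (c : ℝ) (i x) :
    pd i (fun y => c * g y) x = c * pd i g x := by
  unfold pd; rw [fderiv_const_mul (diff hg x)]; rfl

lemma pd_div_const (hf : ContDiff ℝ (⊤ : ℕ∞) f) (c : ℝ) (i x) :
    pd i (fun y => f y / c) x = pd i f x / c := by
  simp only [div_eq_mul_inv]
  unfold pd; rw [fderiv_mul_const (diff hf x)]; simp [mul_comm]

lemma pd_const (c : ℝ) (i : Fin 3) (x : E3) : pd i (fun _ => c) x = 0 := by
  unfold pd; rw [fderiv_fun_const]; rfl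

lemma pd_sum {n : ℕ} (F : Fin n → E3 → ℝ) (hF : ∀ j, ContDiff ℝ (⊤ : ℕ∞) (F j)) (i x) :
    pd i (fun y => ∑ j, F j y) x = ∑ j, pd i (F j) x := by
  unfold pd; rw [fderiv_fun_sum (fun j _ => diff (hF j) x)]; simp

lemma pd_coord (j i : Fin 3) (x : E3) :
    pd i (fun y : E3 => y j) x = if j = i then 1 else 0 := by
  have : (fun y : E3 => y j) = fun y => (EuclideanSpace.proj j : E3 →L[ℝ] ℝ) y := rfl
  unfold pd
  rw [this, ContinuousLinearMap.fderiv]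
  simp [EuclideanSpace.single_apply]

lemma contDiff_coord (j : Fin 3) : ContDiff ℝ (⊤ : ℕ∞) (fun y : E3 => y j) :=
  (EuclideanSpace.proj j : E3 →L[ℝ] ℝ).contDiff

lemma pd_eq_snd (hf : ContDiff ℝ (⊤ : ℕ∞) f) (i j : Fin 3) (x : E3) :
    pd i (pd j f) x = fderiv ℝ (fderiv ℝ f) x (EuclideanSpace.single i 1)
      (EuclideanSpace.single j 1) := by
  have hd : DifferentiableAt ℝ (fderiv ℝ f) x :=
    ((hf.fderiv_right (m := (⊤ : ℕ∞)) (by simp)).differentiable (by simp)).differentiableAt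
  unfold pd
  rw [fderiv_clm_apply hd (differentiableAt_const (EuclideanSpace.single j 1 : E3))]
  simp

lemma pd_comm (hf : ContDiff ℝ (⊤ : ℕ∞) f) (i j : Fin 3) (x : E3) :
    pd i (pd j f) x = pd j (pd i f) x := by
  rw [pd_eq_snd hf, pd_eq_snd hf]
  exact (hf.contDiffAt).isSymmSndFDerivAt (by rw [minSmoothness_of_isRCLikeNormedField]; exact WithTop.coe_le_coe.mpr le_top) _ _

lemma pd_sq (hf : ContDiff ℝ (⊤ : ℕ∞) f) (i x) :
    pd i (fun y => f y ^ 2) x = 2 * f x * pd i f x := by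
  have h : (fun y => f y ^ 2) = fun y => f y * f y := by funext y; ring
  rw [h, pd_mul hf hf]; ring

lemma pd_coord_mul (hg : ContDiff ℝ (⊤ : ℕ∞) g) (j i : Fin 3) (x : E3) :
    pd i (fun y : E3 => y j * g y) x
      = (if j = i then 1 else 0) * g x + x j * pd i g x := by
  rw [pd_mul (contDiff_coord j) hg, pd_coord]

end LerayAux

open LerayAux

/-- if the generalized energy of a smooth solution of the Leray
    equations is constant, then the vorticity vanishes and each component of `U`
    is harmonic. -/
theorem stmt6 (a : ℝ) (ha : 0 < a) (U : E3 → Fin 3 → ℝ) (P : E3 → ℝ)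
    (hU : ContDiff ℝ (⊤ : ℕ∞) (fun x => U x)) (hP : ContDiff ℝ (⊤ : ℕ∞) P)
    (hLeray : ∀ x : E3, ∀ i : Fin 3,
      -lap (fun y => U y i) x + (∑ j, U x j * pd j (fun y => U y i) x) +
        a * (∑ j, x j * pd j (fun y => U y i) x) + a * U x i = -pd i P x)
    (hdiv : ∀ x, divg U x = 0)
    (hconst : ∃ c : ℝ, ∀ y : E3,
      (∑ i, (U y i) ^ 2) / 2 + P y + a * ∑ i, y i * U y i = c) :
    (∀ x : E3, ∀ i : Fin 3, curl U x i = 0) ∧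
      (∀ i : Fin 3, ∀ x : E3, lap (fun y => U y i) x = 0) := by
  have hUc : ∀ j, ContDiff ℝ (⊤ : ℕ∞) (fun y => U y j) := fun j => contDiff_pi.mp hU j
  -- Step 1: gradient of the constant generalized energy vanishes
  have hgrad : ∀ x : E3, ∀ i : Fin 3,
      (∑ j, U x j * pd i (fun y => U y j) x) + pd i P x + a * U x i
        + a * (∑ j, x j * pd i (fun y => U y j) x) = 0 := by
    intro x i
    obtain ⟨c, hc⟩ := hconst
    have cA : ContDiff ℝ (⊤ : ℕ∞) (fun y => (∑ j, (U y j) ^ 2) / 2) :=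
      (ContDiff.sum (fun j _ => (hUc j).pow 2)).div_const 2
    have cB : ContDiff ℝ (⊤ : ℕ∞) (fun y : E3 => ∑ j, y j * U y j) :=
      ContDiff.sum (fun j _ => (contDiff_coord j).mul (hUc j))
    have h0 : pd i (fun y => (∑ j, (U y j) ^ 2) / 2 + P y + a * ∑ j, y j * U y j) x = 0 := by
      have : (fun y : E3 => (∑ j, (U y j) ^ 2) / 2 + P y + a * ∑ j, y j * U y j)
          = fun _ => c := funext hc
      rw [this, pd_const]
    rw [pd_add (cA.add hP) (contDiff_const.mul cB), pd_add cA hP,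
      pd_const_mul cB, pd_div_const (ContDiff.sum (fun j _ => (hUc j).pow 2)),
      pd_sum _ (fun j => (hUc j).pow 2),
      pd_sum _ (fun j => (contDiff_coord j).mul (hUc j))] at h0
    have e1 : ∀ j : Fin 3, pd i (fun y => (U y j) ^ 2) x
        = 2 * U x j * pd i (fun y => U y j) x := fun j => pd_sq (hUc j) i x
    have e2 : ∀ j : Fin 3, pd i (fun y : E3 => y j * U y j) x
        = (if j = i then 1 else 0) * U x j + x j * pd i (fun y => U y j) x :=
      fun j => pd_coord_mul (hUc j) j i x
    simp only [e1, e2, Finset.sum_add_distrib, ite_mul, one_mul, zero_mul,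
      Finset.sum_ite_eq', Finset.mem_univ, if_true] at h0
    simp only [Fin.sum_univ_three] at h0 ⊢
    linarith
  -- Step 2: the Laplacian of each component in rotational form
  have hB : ∀ x : E3, ∀ i : Fin 3, lap (fun y => U y i) x
      = ∑ j, (U x j + a * x j)
          * (pd j (fun y => U y i) x - pd i (fun y => U y j) x) := by
    intro x i
    have h1 := hLeray x i
    have h2 := hgrad x i
    simp only [Fin.sum_univ_three] at h1 h2 ⊢
    linear_combination (-1 : ℝ) * h1 + h2
  -- divergence-free as a function identity
  have hdivfun : (fun z : E3 => ∑ k, pd k (fun y => U y k) z) = fun _ => (0:ℝ) :=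
    funext fun z => hdiv z
  -- Schwarz consequence: ∑ i ∂ᵢ∂ⱼUᵢ = 0
  have hZ1 : ∀ (x : E3) (j : Fin 3),
      ∑ i, pd i (pd j (fun y => U y i)) x = 0 := by
    intro x j
    rw [Finset.sum_congr rfl (fun i _ => pd_comm (hUc i) i j x),
      ← pd_sum (fun i => pd i (fun y => U y i)) (fun i => contDiff_pd (hUc i) i) j x,
      hdivfun, pd_const]
  -- divergence of the componentwise Laplacian vanishes
  have claimL : ∀ x : E3, ∑ i, pd i (fun z => lap (fun y => U y i) z) x = 0 := by
    intro x
    have e1 : ∀ i : Fin 3, pd i (fun z => lap (fun y => U y i) z) x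
        = ∑ k, pd i (pd k (pd k (fun y => U y i))) x := by
      intro i
      have h : (fun z => lap (fun y => U y i) z)
          = fun z => ∑ k, pd k (pd k (fun y => U y i)) z := rfl
      rw [h, pd_sum _ (fun k => contDiff_pd (contDiff_pd (hUc i) k) k)]
    have e2 : ∀ (i k : Fin 3), pd i (pd k (pd k (fun y => U y i))) x
        = pd k (pd k (pd i (fun y => U y i))) x := by
      intro i k
      rw [pd_comm (contDiff_pd (hUc i) k) i k x]
      exact congrArg (fun f => pd k f x) (funext fun z => pd_comm (hUc i) i k z)
    rw [Finset.sum_congr rfl (fun i _ => e1 i),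
      Finset.sum_congr rfl (fun i _ => Finset.sum_congr rfl (fun k _ => e2 i k)),
      Finset.sum_comm]
    have e3 : ∀ k : Fin 3, ∑ i, pd k (pd k (pd i (fun y => U y i))) x = 0 := by
      intro k
      rw [← pd_sum (fun i => pd k (pd i (fun y => U y i)))
        (fun i => contDiff_pd (contDiff_pd (hUc i) i) k) k x]
      have h1 : (fun z => ∑ i, pd k (pd i (fun y => U y i)) z)
          = pd k (fun z => ∑ i, pd i (fun y => U y i) z) := by
        funext z
        exact (pd_sum (fun i => pd i (fun y => U y i))
          (fun i => contDiff_pd (hUc i) i) k z).symm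
      rw [h1, hdivfun]
      have h2 : pd k (fun _ : E3 => (0:ℝ)) = fun _ : E3 => (0:ℝ) :=
        funext fun z => pd_const 0 k z
      rw [h2, pd_const]
    rw [Finset.sum_congr rfl (fun k _ => e3 k)]
    simp
  -- the key pointwise identity
  have key : ∀ x : E3, ∑ i : Fin 3, ∑ j : Fin 3,
      ((pd i (fun y => U y j) x + a * (if j = i then 1 else 0))
          * (pd j (fun y => U y i) x - pd i (fun y => U y j) x)
        + (U x j + a * x j)
          * (pd i (pd j (fun y => U y i)) x - pd i (pd i (fun y => U y j)) x)) = 0 := by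
    intro x
    refine Eq.trans ?_ (claimL x)
    apply Finset.sum_congr rfl
    intro i _
    symm
    have hfun : (fun z => lap (fun y => U y i) z)
        = fun z => ∑ j, (U z j + a * z j)
            * (pd j (fun y => U y i) z - pd i (fun y => U y j) z) :=
      funext fun z => hB z i
    have hV : ∀ j : Fin 3, ContDiff ℝ (⊤ : ℕ∞) (fun z : E3 => U z j + a * z j) :=
      fun j => (hUc j).add (contDiff_const.mul (contDiff_coord j))
    have hW : ∀ j : Fin 3, ContDiff ℝ (⊤ : ℕ∞)
        (fun z => pd j (fun y => U y i) z - pd i (fun y => U y j) z) :=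
      fun j => (contDiff_pd (hUc i) j).sub (contDiff_pd (hUc j) i)
    rw [hfun, pd_sum _ (fun j => (hV j).mul (hW j))]
    apply Finset.sum_congr rfl
    intro j _
    rw [pd_mul (hV j) (hW j), pd_sub (contDiff_pd (hUc i) j) (contDiff_pd (hUc j) i),
      pd_add (hUc j) (contDiff_const.mul (contDiff_coord j)),
      pd_const_mul (contDiff_coord j), pd_coord]
  -- symmetry of the velocity gradient
  have hsym : ∀ (x : E3) (i j : Fin 3),
      pd i (fun y => U y j) x = pd j (fun y => U y i) x := by
    intro x
    have hk := key x
    have hz0 := hZ1 x 0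
    have hz1 := hZ1 x 1
    have hz2 := hZ1 x 2
    have hl : ∀ j : Fin 3, ∑ i : Fin 3, pd i (pd i (fun y => U y j)) x
        = ∑ k, (U x k + a * x k)
            * (pd k (fun y => U y j) x - pd j (fun y => U y k) x) := fun j => hB x j
    have hl0 := hl 0
    have hl1 := hl 1
    have hl2 := hl 2
    simp only [Fin.sum_univ_three] at hk hz0 hz1 hz2 hl0 hl1 hl2
    norm_num [show ((2:Fin 3) = 0) = False by decide, show ((2:Fin 3) = 1) = False by decide,
      show ((0:Fin 3) = 2) = False by decide, show ((1:Fin 3) = 2) = False by decide,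
      show ((0:Fin 3) = 1) = False by decide, show ((1:Fin 3) = 0) = False by decide] at hk
    have hquad :
        (pd 0 (fun y => U y 1) x - pd 1 (fun y => U y 0) x) ^ 2
        + (pd 0 (fun y => U y 2) x - pd 2 (fun y => U y 0) x) ^ 2
        + (pd 1 (fun y => U y 2) x - pd 2 (fun y => U y 1) x) ^ 2 = 0 := by
      linear_combination (-1 : ℝ) * hk
        + (U x 0 + a * x 0) * hz0 + (U x 1 + a * x 1) * hz1
        + (U x 2 + a * x 2) * hz2
        - (U x 0 + a * x 0) * hl0 - (U x 1 + a * x 1) * hl1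
        - (U x 2 + a * x 2) * hl2
    have sq01 := sq_nonneg (pd 0 (fun y => U y 1) x - pd 1 (fun y => U y 0) x)
    have sq02 := sq_nonneg (pd 0 (fun y => U y 2) x - pd 2 (fun y => U y 0) x)
    have sq12 := sq_nonneg (pd 1 (fun y => U y 2) x - pd 2 (fun y => U y 1) x)
    have h01 : pd 0 (fun y => U y 1) x = pd 1 (fun y => U y 0) x := by
      have : (pd 0 (fun y => U y 1) x - pd 1 (fun y => U y 0) x) ^ 2 = 0 := by linarith
      have := (pow_eq_zero_iff two_ne_zero).mp this
      linarith
    have h02 : pd 0 (fun y => U y 2) x = pd 2 (fun y => U y 0) x := by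
      have : (pd 0 (fun y => U y 2) x - pd 2 (fun y => U y 0) x) ^ 2 = 0 := by linarith
      have := (pow_eq_zero_iff two_ne_zero).mp this
      linarith
    have h12 : pd 1 (fun y => U y 2) x = pd 2 (fun y => U y 1) x := by
      have : (pd 1 (fun y => U y 2) x - pd 2 (fun y => U y 1) x) ^ 2 = 0 := by linarith
      have := (pow_eq_zero_iff two_ne_zero).mp this
      linarith
    intro i j
    fin_cases i <;> fin_cases j <;>
      first
        | rfl
        | exact h01 | exact h01.symm
        | exact h02 | exact h02.symm
        | exact h12 | exact h12.symm
  constructor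
  · intro x i
    show pd (i + 1) (fun y => U y (i + 2)) x - pd (i + 2) (fun y => U y (i + 1)) x = 0
    rw [hsym x (i + 1) (i + 2)]
    ring
  · intro i x
    rw [hB x i]
    apply Finset.sum_eq_zero
    intro j _
    rw [hsym x j i]
    ring

end
end
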